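/- arXiv:0808.0868 — 2 statements merged into one kernel-verified Lean document; each statement's English description precedes it below -/
import Mathlib

section
/- Let σ : A₁ → A₀* be a proper morphism with all images beginning with the letter l and ending with the letter r, and let σ' : A₂ → A₁* be a morphism such that every letter of A₁ occurs in σ'(e) for every e ∈ A₂. Let y ∈ A₂^ℕ and z = σσ'(y). Then the words of length 2 occurring in z are exactly the words of length 2 occurring in some σ(e), e ∈ A₁, together with the word rl; moreover every word of length 2 occurring in z occurs with gaps bounded by 2·max{|σ'(e)| : e ∈ A₂} · max{|σ(e)| : e ∈ A₁}. -/
namespace DurandLR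

variable {A B : Type*}

/-- `u` occurs at position `i` in the one-sided sequence `x`. -/
def OccursAt (x : ℕ → A) (u : List A) (i : ℕ) : Prop :=
  ∀ k : Fin u.length, x (i + (k : ℕ)) = u.get k

/-- `u` occurs (somewhere) in the one-sided sequence `x`. -/
def Occurs (x : ℕ → A) (u : List A) : Prop := ∃ i, OccursAt x u i

/-- `u` occurs at position `i` in the two-sided sequence `x`. -/
def OccursAtZ (x : ℤ → A) (u : List A) (i : ℤ) : Prop :=
  ∀ k : Fin u.length, x (i + (k : ℕ)) = u.get k

def OccursZ (x : ℤ → A) (u : List A) : Prop := ∃ i, OccursAtZ x u i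

/-- The word `u` has exactly `m` occurrences in the finite word `w`. -/
def OccCountEq (u w : List A) (m : ℕ) : Prop :=
  {i : ℕ | u <+: w.drop i}.ncard = m

/-- `w` is a return word to `u` in the one-sided sequence `x`: `wu` occurs in `x`,
`u` is a prefix of `wu` and `u` has exactly two occurrences in `wu`. -/
def IsReturnWord (x : ℕ → A) (u w : List A) : Prop :=
  Occurs x (w ++ u) ∧ u <+: (w ++ u) ∧ OccCountEq u (w ++ u) 2

/-- `w` is a return word to `u` in the two-sided sequence `x`. -/
def IsReturnWordZ (x : ℤ → A) (u w : List A) : Prop :=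
  OccursZ x (w ++ u) ∧ u <+: (w ++ u) ∧ OccCountEq u (w ++ u) 2

/-- `x` is uniformly recurrent: every word occurring in `x` occurs with bounded gaps. -/
def UniformlyRecurrent (x : ℕ → A) : Prop :=
  ∀ u, Occurs x u → ∃ M : ℕ, ∀ i : ℕ, ∃ j, i ≤ j ∧ j < i + M ∧ OccursAt x u j

def UniformlyRecurrentZ (x : ℤ → A) : Prop :=
  ∀ u, OccursZ x u → ∃ M : ℕ, ∀ i : ℤ, ∃ j : ℤ, i ≤ j ∧ j < i + M ∧ OccursAtZ x u j

/-- `x` is linearly recurrent with constant `K`. -/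
def LinearlyRecurrentWith (x : ℕ → A) (K : ℕ) : Prop :=
  UniformlyRecurrent x ∧ ∀ u w, IsReturnWord x u w → w.length ≤ K * u.length

def LinearlyRecurrent (x : ℕ → A) : Prop := ∃ K, LinearlyRecurrentWith x K

def LinearlyRecurrentZ (x : ℤ → A) : Prop :=
  UniformlyRecurrentZ x ∧ ∃ K : ℕ, ∀ u w, IsReturnWordZ x u w → w.length ≤ K * u.length

/-- The subshift generated by a two-sided sequence `x` : all `z` whose finite subwords
occur in `x`. -/
def SubshiftGenZ (x : ℤ → A) : Set (ℤ → A) := {z | ∀ u, OccursZ z u → OccursZ x u}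

/-- The subshift generated by a one-sided sequence `x`. -/
def SubshiftGen (x : ℕ → A) : Set (ℤ → A) := {z | ∀ u, OccursZ z u → Occurs x u}

/-- A minimal subshift: nonempty and every element generates it. -/
def IsMinimalSubshift (X : Set (ℤ → A)) : Prop :=
  X.Nonempty ∧ ∀ z ∈ X, X = SubshiftGenZ z

/-- A linearly recurrent subshift: minimal and containing an LR sequence. -/
def IsLRSubshift (X : Set (ℤ → A)) : Prop :=
  IsMinimalSubshift X ∧ ∃ x ∈ X, LinearlyRecurrentZ x

def IsPeriodic (z : ℤ → A) : Prop := ∃ p : ℕ, 0 < p ∧ ∀ n : ℤ, z (n + p) = z n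

/-- Image of a finite word under a morphism (substitution). -/
def wordMap (σ : A → List B) : List A → List B
  | [] => []
  | a :: u => σ a ++ wordMap σ u

/-- Composition of two morphisms: `compM σ τ = σ ∘ τ`. -/
def compM (σ τ : A → List A) : A → List A := fun b => wordMap σ (τ b)

/-- Iterate of a morphism: `powM σ n = σ^n`. -/
def powM (σ : A → List A) : ℕ → A → List A
  | 0 => fun b => [b]
  | n + 1 => compM σ (powM σ n)

/-- `chain σ r n = σ_r ∘ σ_{r+1} ∘ ⋯ ∘ σ_{r+n-1}` (the empty composition for `n = 0`). -/
def chain (σ : ℕ → A → List A) (r : ℕ) : ℕ → A → List A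
  | 0 => fun b => [b]
  | n + 1 => fun b => wordMap (chain σ r n) (σ (r + n) b)

/-- The periodic infinite sequence `www⋯` obtained by repeating the word `w`
(with a default letter for the degenerate empty case). -/
def repSeq (w : List A) (d : A) : ℕ → A := fun i => w.getD (i % w.length) d

/-- The prefix of length `n` of the sequence `x`, as a word. -/
def seqTake (x : ℕ → A) (n : ℕ) : List A := (List.range n).map x

/-- `y` is the image of the infinite sequence `z` under the morphism `σ`:
the image of every prefix of `z` is a prefix of `y`. -/
def IsSeqImage (σ : A → List B) (z : ℕ → A) (y : ℕ → B) : Prop :=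
  ∀ n, seqTake y (wordMap σ (seqTake z n)).length = wordMap σ (seqTake z n)

/-- `σ_0 σ_1 ⋯ σ_n (aaa⋯)` converges to `x` in the product topology, where the `n`-th
approximation is the periodic sequence obtained by repeating the word `W n`. -/
def ConvergesTo (W : ℕ → List A) (d : A) (x : ℕ → A) : Prop :=
  ∀ m, ∃ N, ∀ n ≥ N, repSeq (W n) d m = x m

/-- A proper morphism: all images begin with the same letter and end with the same letter. -/
def ProperMorphism (σ : A → List A) : Prop :=
  ∃ l r : A, ∀ b, (σ b).head? = some l ∧ (σ b).getLast? = some r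

/-- Primitivity with constant `s₀` of a directive sequence of morphisms
`σ_n : A_{n+1} → A_n^*`: every `b ∈ A_r` occurs in `σ_{r+1} ⋯ σ_{r+s₀} (c)`
for every `c ∈ A_{r+s₀+1}`. -/
def PrimitiveWith (σ : ℕ → A → List A) (Aseq : ℕ → Set A) (s0 : ℕ) : Prop :=
  ∀ r : ℕ, ∀ b ∈ Aseq r, ∀ c ∈ Aseq (r + s0 + 1), b ∈ chain σ (r + 1) s0 c

/-- The data of an S-adic system: `a` belongs to every alphabet and
`σ_n` maps `A_{n+1}` into words over `A_n`. -/
def SAdicSystem (σ : ℕ → A → List A) (Aseq : ℕ → Set A) (a : A) : Prop :=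
  (∀ n, a ∈ Aseq n) ∧ (∀ n, ∀ b ∈ Aseq (n + 1), ∀ c ∈ σ n b, c ∈ Aseq n)

/-- `x` is the S-adic sequence generated by the directive sequence `σ` and letter `a`:
`σ_0 σ_1 ⋯ σ_n (aaa⋯)` converges to `x`. -/
def GeneratesSAdic (σ : ℕ → A → List A) (Aseq : ℕ → Set A) (a : A) (x : ℕ → A) : Prop :=
  SAdicSystem σ Aseq a ∧ ConvergesTo (fun n => chain σ 0 (n + 1) a) a x

/-- The complexity function `p_x(n)`: the number of distinct words of length `n`
occurring in `x`. -/
noncomputable def complexity (x : ℕ → A) (n : ℕ) : ℕ := {u : List A | u.length = n ∧ Occurs x u}.ncard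

/-- Any two successive occurrences of `u` in `x` differ by at most `M`. -/
def GapsBoundedBy (x : ℕ → A) (u : List A) (M : ℕ) : Prop :=
  ∀ i j, OccursAt x u i → OccursAt x u j → i < j →
    (∀ k, i < k → k < j → ¬ OccursAt x u k) → j - i ≤ M

/-- The finite word `x_{[p,q)}` of a two-sided sequence. -/
def zSeg (x : ℤ → A) (p q : ℤ) : List A := (List.range (q - p).toNat).map fun t => x (p + t)

/-- `w` is a return word to `u.v` in the two-sided sequence `x`: there are two
consecutive occurrences `j < k` of `uv` in `x` with `w = x_{[j+|u|, k+|u|)}`. -/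
def IsReturnWordUV (x : ℤ → A) (u v w : List A) : Prop :=
  ∃ j k : ℤ, OccursAtZ x (u ++ v) j ∧ OccursAtZ x (u ++ v) k ∧ j < k ∧
    (∀ i : ℤ, j < i → i < k → ¬ OccursAtZ x (u ++ v) i) ∧
    w = zSeg x (j + u.length) (k + u.length)

/-- The substitution `σ` on `{a,b,c} = {0,1,2}`: `σ(a)=acb`, `σ(b)=bab`, `σ(c)=cbc`. -/
def sigma3 : Fin 3 → List (Fin 3) := ![[0, 2, 1], [1, 0, 1], [2, 1, 2]]

/-- The substitution `τ` on `{a,b,c} = {0,1,2}`: `τ(a)=abc`, `τ(b)=acb`, `τ(c)=aac`. -/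
def tau3 : Fin 3 → List (Fin 3) := ![[0, 1, 2], [0, 2, 1], [0, 0, 2]]

/-- `rho n = σ τ σ² τ ⋯ σⁿ τ` (identity for `n = 0`). -/
def rho : ℕ → Fin 3 → List (Fin 3)
  | 0 => fun b => [b]
  | n + 1 => compM (rho n) (compM (powM sigma3 (n + 1)) tau3)

/-- `psi n l = σ^{n+2} τ σ^{n+3} τ ⋯ σ^{n+l+1} τ` (identity for `l = 0`). -/
def psi (n : ℕ) : ℕ → Fin 3 → List (Fin 3)
  | 0 => fun b => [b]
  | l + 1 => compM (psi n l) (compM (powM sigma3 (n + 2 + l)) tau3)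

/-- The Sturmian substitution `τ` on `{0,1}`: `τ(0)=0`, `τ(1)=10`. -/
def tau2 : Fin 2 → List (Fin 2) := ![[0], [1, 0]]

/-- The Sturmian substitution `σ` on `{0,1}`: `σ(0)=01`, `σ(1)=1`. -/
def sigma2 : Fin 2 → List (Fin 2) := ![[0, 1], [1]]

/-- `xi i k = τ^{i₁} σ^{i₂} τ^{i₃} ⋯ τ^{i_{2k-1}} σ^{i_{2k}}` (identity for `k = 0`). -/
def xi (i : ℕ → ℕ) : ℕ → Fin 2 → List (Fin 2)
  | 0 => fun b => [b]
  | k + 1 => compM (xi i k) (compM (powM tau2 (i (2 * k + 1))) (powM sigma2 (i (2 * k + 2))))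

/-- `a : ℕ → ℕ` gives (from index 1 on) the continued fraction expansion
`α = [0; a₁, a₂, a₃, …]`, expressed through the Gauss map. -/
def IsCFExpansion (α : ℝ) (a : ℕ → ℕ) : Prop :=
  ∃ β : ℕ → ℝ, β 0 = α ∧ ∀ n : ℕ,
    0 < β n ∧ β n < 1 ∧ (a (n + 1) : ℤ) = ⌊1 / β n⌋ ∧ β (n + 1) = 1 / β n - ⌊1 / β n⌋

/-!
Put `η = σσ'`. Every `η e` begins with `l`, ends with `r` and contains every `σ b`, and `z` is
the concatenation of the blocks `η (y n)`. A window of length two in `z = σ(σ'(y))` either lies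
inside one `σ b` or straddles two consecutive ones, and then reads `rl`. Conversely every `σ b`
lies inside every block `η (y n)` and `rl` straddles every block boundary, so each word of length
two occurs in every block; since blocks have length at most `max|σ'| · max|σ|`, consecutive
occurrences are less than two blocks apart.
-/

lemma wordMap_eq_flatMap (σ : A → List B) (v : List A) : wordMap σ v = v.flatMap σ := by
  induction v with
  | nil => rfl
  | cons a v ih => simp [wordMap, ih]

lemma length_flatMap_le {σ : A → List B} {M : ℕ} (h : ∀ a, (σ a).length ≤ M) (v : List A) :
    (v.flatMap σ).length ≤ v.length * M := by
  rw [List.length_flatMap, ← smul_eq_mul]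
  exact List.sum_le_card_nsmul _ _ (by simpa using fun a _ => h a) |>.trans_eq (by simp)

lemma infix_flatMap_of_mem (σ : A → List B) {a : A} {v : List A} (h : a ∈ v) :
    σ a <:+: v.flatMap σ :=
  List.infix_of_mem_flatten (List.mem_map_of_mem h)

lemma pair_infix_append {a b : A} {s t : List A} (h : [a, b] <:+: s ++ t) :
    [a, b] <:+: s ∨ [a, b] <:+: t ∨ s.getLast? = some a ∧ t.head? = some b := by
  rcases List.infix_append_iff.1 h with h | h | ⟨_ | ⟨c, _ | ⟨d, _ | _⟩⟩, l₂, he, h₁, h₂⟩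
  · exact .inl h
  · exact .inr (.inl h)
  · simp only [List.nil_append] at he
    exact .inr (.inl (he ▸ h₂.isInfix))
  · obtain ⟨rfl, rfl⟩ : a = c ∧ [b] = l₂ := by simpa using he
    exact .inr (.inr ⟨List.singleton_suffix_iff_getLast?_eq_some.1 h₁,
      List.singleton_prefix_iff_head?_eq_some.1 h₂⟩)
  · obtain ⟨rfl, rfl, rfl⟩ : a = c ∧ b = d ∧ l₂ = [] := by simpa using he
    exact .inl h₁.isInfix
  · simp at he

def IsProperWith (σ : A → List B) (l r : B) : Prop :=
  ∀ a, (σ a).head? = some l ∧ (σ a).getLast? = some r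

namespace IsProperWith

variable {σ : A → List B} {l r : B}

lemma ne_nil (hσ : IsProperWith σ l r) (a : A) : σ a ≠ [] := by
  intro h
  simpa [h] using (hσ a).1

lemma flatMap {C : Type*} (hσ : IsProperWith σ l r) {τ : C → List A} (hτ : ∀ c, τ c ≠ []) :
    IsProperWith (fun c => (τ c).flatMap σ) l r := by
  intro c
  constructor
  · obtain ⟨a, v, hav⟩ := List.exists_cons_of_ne_nil (hτ c)
    simp [hav, (hσ a).1]
  · obtain ⟨a, v, hav⟩ := List.exists_cons_of_ne_nil (List.reverse_ne_nil_iff.2 (hτ c))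
    simp [List.getLast?_flatMap, hav, (hσ a).2]

lemma pair_infix_flatMap (hσ : IsProperWith σ l r) {a b : B} {v : List A}
    (h : [a, b] <:+: v.flatMap σ) : (∃ c, [a, b] <:+: σ c) ∨ a = r ∧ b = l := by
  induction v with
  | nil => simp at h
  | cons c v ih =>
    rw [List.flatMap_cons] at h
    rcases pair_infix_append h with h | h | ⟨ha, hb⟩
    · exact .inl ⟨c, h⟩
    · exact ih h
    · have hv : v ≠ [] := by rintro rfl; simp at hb
      obtain ⟨d, w, rfl⟩ := List.exists_cons_of_ne_nil hv
      simp_all [(hσ c).2, (hσ d).1]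

end IsProperWith

namespace OccursAt

variable {x : ℕ → A} {u w : List A} {i : ℕ}

lemma apply_add (h : OccursAt x w i) {k : ℕ} (hk : k < w.length) : x (i + k) = w[k] :=
  h ⟨k, hk⟩

lemma exists_of_infix (h : OccursAt x w i) (hu : u <:+: w) :
    ∃ j, j + u.length ≤ w.length ∧ OccursAt x u (i + j) := by
  obtain ⟨j, hj, hget⟩ := List.infix_iff_getElem?.1 hu
  refine ⟨j, by omega, fun k => ?_⟩
  have hk : k + j < w.length := by omega
  have := hget k k.2
  rw [List.getElem?_eq_getElem hk, Option.some_inj] at this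
  change x (i + j + k) = u[(k : ℕ)]
  rw [← this, ← h.apply_add hk, add_assoc, add_comm j]

lemma infix_seqTake (h : OccursAt x u i) {m : ℕ} (hm : i + u.length ≤ m) :
    u <:+: seqTake x m := by
  refine List.infix_iff_getElem?.2 ⟨i, by simpa [seqTake, add_comm] using hm, fun k hk => ?_⟩
  rw [seqTake, List.getElem?_map, List.getElem?_range (by omega), add_comm, Option.map_some,
    h.apply_add hk]

end OccursAt

lemma occursAt_pair {x : ℕ → A} {a b : A} {i : ℕ} (ha : x i = a) (hb : x (i + 1) = b) :
    OccursAt x [a, b] i := by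
  intro k
  fin_cases k <;> simpa

lemma gapsBoundedBy_of_exists_next {x : ℕ → A} {u : List A} {M : ℕ}
    (h : ∀ i, OccursAt x u i → ∃ k, i < k ∧ k ≤ i + M ∧ OccursAt x u k) :
    GapsBoundedBy x u M := by
  intro i j hi _ hij hnone
  obtain ⟨k, hik, hkM, hk⟩ := h i hi
  by_contra! hgap
  exact hnone k hik (by omega) hk

lemma seqTake_add (x : ℕ → A) (a b : ℕ) :
    seqTake x (a + b) = seqTake x a ++ seqTake (fun t => x (a + t)) b := by
  simp [seqTake, List.range_add]

lemma occursAt_of_seqTake_eq {x : ℕ → A} {u : List A} {i : ℕ}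
    (h : seqTake (fun t => x (i + t)) u.length = u) : OccursAt x u i := by
  intro k
  have := congrArg (·[(k : ℕ)]?) h
  simpa [seqTake] using this

section Blocks

variable {τ : A → List B} {y : ℕ → A} {z : ℕ → B}

def blockStart (τ : A → List B) (y : ℕ → A) (n : ℕ) : ℕ := ((seqTake y n).flatMap τ).length

lemma blockStart_zero : blockStart τ y 0 = 0 := rfl

lemma blockStart_succ (n : ℕ) :
    blockStart τ y (n + 1) = blockStart τ y n + (τ (y n)).length := by
  rw [blockStart, blockStart, seqTake_add]
  simp [seqTake]

lemma blockStart_succ_le {P : ℕ} (hP : ∀ a, (τ a).length ≤ P) (n : ℕ) :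
    blockStart τ y (n + 1) ≤ blockStart τ y n + P :=
  (blockStart_succ n).trans_le (Nat.add_le_add_left (hP _) _)

lemma blockStart_strictMono (hτ : ∀ a, τ a ≠ []) : StrictMono (blockStart τ y) :=
  strictMono_nat_of_lt_succ fun n => by
    rw [blockStart_succ]
    exact Nat.lt_add_of_pos_right (List.length_pos_iff.2 (hτ _))

lemma exists_blockStart_le_lt (hτ : ∀ a, τ a ≠ []) (i : ℕ) :
    ∃ n, blockStart τ y n ≤ i ∧ i < blockStart τ y (n + 1) := by
  induction i with
  | zero => exact ⟨0, blockStart_zero.le, blockStart_strictMono hτ Nat.zero_lt_one⟩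
  | succ i ih =>
    obtain ⟨n, hn, hin⟩ := ih
    by_cases hi : i + 1 < blockStart τ y (n + 1)
    · exact ⟨n, by omega, hi⟩
    · exact ⟨n + 1, by omega,
        (blockStart_strictMono hτ (n + 1).lt_succ_self).trans_le' (by omega)⟩

namespace IsSeqImage

lemma seqTake_blockStart (hz : IsSeqImage τ y z) (n : ℕ) :
    seqTake z (blockStart τ y n) = (seqTake y n).flatMap τ := by
  simpa [blockStart, wordMap_eq_flatMap] using hz n

lemma occursAt_block (hz : IsSeqImage τ y z) (n : ℕ) :
    OccursAt z (τ (y n)) (blockStart τ y n) := by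
  apply occursAt_of_seqTake_eq
  have h := hz.seqTake_blockStart (n + 1)
  rw [blockStart_succ, seqTake_add, hz.seqTake_blockStart n, seqTake_add] at h
  simpa [seqTake] using h

lemma infix_flatMap (hz : IsSeqImage τ y z) (hτ : ∀ a, τ a ≠ []) {u : List B} {i : ℕ}
    (h : OccursAt z u i) :
    u <:+: (seqTake y (i + u.length)).flatMap τ :=
  hz.seqTake_blockStart _ ▸ h.infix_seqTake ((blockStart_strictMono hτ).id_le _)

lemma occursAt_boundary (hz : IsSeqImage τ y z) {l r : B} (hτ : IsProperWith τ l r)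
    (n : ℕ) :
    OccursAt z [r, l] (blockStart τ y (n + 1) - 1) := by
  have hpos : ∀ a, 0 < (τ a).length := fun a => List.length_pos_iff.2 (hτ.ne_nil a)
  have hlast := (hτ (y n)).2
  have hhead := (hτ (y (n + 1))).1
  rw [List.getLast?_eq_getElem?, List.getElem?_eq_getElem (Nat.sub_lt (hpos _) one_pos),
    Option.some_inj] at hlast
  rw [List.head?_eq_getElem?, List.getElem?_eq_getElem (hpos _), Option.some_inj] at hhead
  apply occursAt_pair
  · have hpos := hpos (y n)
    rw [blockStart_succ, Nat.add_sub_assoc hpos, (hz.occursAt_block n).apply_add (by omega)]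
    exact hlast
  · rw [Nat.sub_add_cancel ((blockStart_strictMono hτ.ne_nil).id_le _ |>.trans_lt' n.succ_pos),
      ← add_zero (blockStart τ y _), (hz.occursAt_block _).apply_add (hpos _), hhead]

lemma exists_occursAt_block_of_infix (hz : IsSeqImage τ y z) {n : ℕ} {u : List B}
    (hu : u <:+: τ (y n)) (hu₀ : u ≠ []) :
    ∃ k, blockStart τ y n ≤ k ∧ k < blockStart τ y (n + 1) ∧ OccursAt z u k := by
  obtain ⟨j, hj, hk⟩ := (hz.occursAt_block n).exists_of_infix hu
  have := List.length_pos_iff.2 hu₀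
  exact ⟨_, le_self_add, by rw [blockStart_succ]; omega, hk⟩

lemma exists_occursAt_block_boundary (hz : IsSeqImage τ y z) {l r : B}
    (hτ : IsProperWith τ l r) (n : ℕ) :
    ∃ k, blockStart τ y n ≤ k ∧ k < blockStart τ y (n + 1) ∧ OccursAt z [r, l] k := by
  have : blockStart τ y n < blockStart τ y (n + 1) :=
    blockStart_strictMono hτ.ne_nil n.lt_succ_self
  exact ⟨_, by omega, by omega, hz.occursAt_boundary hτ n⟩

end IsSeqImage

lemma gapsBoundedBy_of_occursAt_every_block (hτ : ∀ a, τ a ≠ []) {P : ℕ}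
    (hP : ∀ a, (τ a).length ≤ P) {x : ℕ → B} {u : List B}
    (h : ∀ n, ∃ k, blockStart τ y n ≤ k ∧ k < blockStart τ y (n + 1) ∧ OccursAt x u k) :
    GapsBoundedBy x u (2 * P) := by
  refine gapsBoundedBy_of_exists_next fun i _ => ?_
  obtain ⟨n, hni, hin⟩ := exists_blockStart_le_lt (y := y) hτ i
  obtain ⟨k, hk₁, hk₂, hk⟩ := h (n + 1)
  have := blockStart_succ_le (y := y) hP n
  have := blockStart_succ_le (y := y) hP (n + 1)
  exact ⟨k, by omega, by omega, hk⟩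

end Blocks

lemma IsSeqImage.pair_infix_or_eq_of_occurs {C : Type*} {σ : B → List C} {τ : A → List B}
    {y : ℕ → A} {z : ℕ → C} {l r a b : C} (hσ : IsProperWith σ l r) (hτ : ∀ a, τ a ≠ [])
    (hz : IsSeqImage (fun a => (τ a).flatMap σ) y z) (h : Occurs z [a, b]) :
    (∃ c, [a, b] <:+: σ c) ∨ a = r ∧ b = l := by
  obtain ⟨i, hi⟩ := h
  have := hz.infix_flatMap (hσ.flatMap hτ).ne_nil hi
  rw [← List.flatMap_assoc] at this
  exact hσ.pair_infix_flatMap this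

/-- Let `σ : A₁ → A₀*` be proper (with first letter `l` and last letter `r`) and
`σ' : A₂ → A₁*` be such that every letter of `A₁` occurs in every image of `σ'`.
If `z = σσ'(y)`, then the words of length 2 occurring in `z` are exactly the words of
length 2 occurring in some `σ(e)` together with `rl`, and every word of length 2 of `z`
occurs with gaps bounded by `2·max|σ'|·max|σ|`. -/
theorem length_two_words_of_proper_image {A0 A1 A2 : Type*}
    [Fintype A1] [Fintype A2] [Nonempty A1]
    (σ : A1 → List A0) (l r : A0)
    (hσ : ∀ b, (σ b).head? = some l ∧ (σ b).getLast? = some r)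
    (σ' : A2 → List A1) (hσ' : ∀ e, ∀ b : A1, b ∈ σ' e)
    (y : ℕ → A2) (z : ℕ → A0)
    (hz : IsSeqImage (fun e => wordMap σ (σ' e)) y z) :
    (∀ u : List A0, u.length = 2 →
        (Occurs z u ↔ ((∃ e : A1, u <:+: σ e) ∨ u = [r, l]))) ∧
    (∀ u : List A0, u.length = 2 → Occurs z u →
        GapsBoundedBy z u
          (2 * (Finset.univ.sup fun e : A2 => (σ' e).length) *
            (Finset.univ.sup fun e : A1 => (σ e).length))) := by
  set η : A2 → List A0 := fun e => (σ' e).flatMap σ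
  have hσ'_ne : ∀ e, σ' e ≠ [] := fun e => List.ne_nil_of_mem (hσ' e (Classical.arbitrary A1))
  have hη : IsProperWith η l r := IsProperWith.flatMap hσ hσ'_ne
  have hz' : IsSeqImage η y z := by simpa only [wordMap_eq_flatMap] using hz
  have hη_len (e : A2) : (η e).length ≤ _ * _ :=
    (length_flatMap_le (fun b => Finset.le_sup (f := fun b => (σ b).length) (Finset.mem_univ b))
      _).trans (Nat.mul_le_mul_right _ (Finset.le_sup (f := fun e => (σ' e).length)
        (Finset.mem_univ e)))
  have hwords (a b : A0) : Occurs z [a, b] → (∃ e, [a, b] <:+: σ e) ∨ a = r ∧ b = l :=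
    hz'.pair_infix_or_eq_of_occurs hσ hσ'_ne
  have hblock (a b : A0) (h : (∃ e, [a, b] <:+: σ e) ∨ a = r ∧ b = l) (n : ℕ) :
      ∃ k, blockStart η y n ≤ k ∧ k < blockStart η y (n + 1) ∧ OccursAt z [a, b] k := by
    rcases h with ⟨e, he⟩ | ⟨rfl, rfl⟩
    · exact hz'.exists_occursAt_block_of_infix
        (he.trans (infix_flatMap_of_mem σ (hσ' _ e))) (List.cons_ne_nil _ _)
    · exact hz'.exists_occursAt_block_boundary hη n
  refine ⟨fun u hu => ?_, fun u hu hocc => ?_⟩ <;>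
    obtain ⟨a, b, rfl⟩ := List.length_eq_two.1 hu
  · refine ⟨fun h => (hwords a b h).imp_right fun ⟨ha, hb⟩ => ha ▸ hb ▸ rfl, fun h => ?_⟩
    obtain ⟨k, -, -, hk⟩ := hblock a b (by simpa using h) 0
    exact ⟨k, hk⟩
  · rw [mul_assoc]
    exact gapsBoundedBy_of_occursAt_every_block hη.ne_nil hη_len
      (hblock a b (hwords a b hocc))

end DurandLR
end

section
/- Let (i_n ; n ≥ 1) be a bounded sequence of positive integers and let x = lim_{k→∞} τ^{i₁}σ^{i₂}τ^{i₃}⋯τ^{i_{2k-1}}σ^{i_{2k}}(000⋯) ∈ {0,1}^ℕ. Then x is linearly recurrent. -/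
namespace DurandLR

variable {A B : Type*}

/-!
Write `ζ_k = τ^{i_{2k+1}} σ^{i_{2k+2}}`, so that `ξ_k = ζ_0 ⋯ ζ_{k-1}`, and let `y_k` be the
limit of `ζ_k ζ_{k+1} ⋯ ζ_{k+n}(0)`; then `x = y_0 = ξ_k(y_k)` for every `k`. If `B` bounds the
`i_n`, then `2 ≤ |ζ_k(b)| ≤ C := 1 + B(1 + B)`, so the block lengths `|ξ_k(b)|` grow by factors
at most `C`, and for every word `u` there is a level `k` with `|u| ≤ |ξ_k(b)| ≤ C² |u|`. Every
occurrence of `u` then lies in `ξ_k(bc)` for a two-letter factor `bc` of `y_k`. These factors are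
`00`, `01`, `10`, all contained in `ζ_k(10)`, which lies in `ζ_k ζ_{k+1}(e)` for each letter `e`;
so they recur in `y_k` with gaps at most `2C²`, and `u` recurs in `x` with gaps at most
`(2C² + 1) C² |u|`, which bounds the return words to `u`.
-/

@[simp] theorem wordMap_eq_flatMap_s15 (φ : A → List B) (w : List A) : wordMap φ w = w.flatMap φ := by
  induction w with
  | nil => rfl
  | cons a w ih => simp [wordMap, ih]

theorem length_flatMap_le_s15 {φ : A → List B} {L : ℕ} (h : ∀ b, (φ b).length ≤ L) (w : List A) :
    (w.flatMap φ).length ≤ w.length * L := by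
  rw [List.length_flatMap]
  simpa using List.sum_le_card_nsmul (w.map fun b => (φ b).length) L (by simp [h])

theorem le_length_flatMap {φ : A → List B} {L : ℕ} (h : ∀ b, L ≤ (φ b).length) (w : List A) :
    w.length * L ≤ (w.flatMap φ).length := by
  rw [List.length_flatMap]
  simpa using List.card_nsmul_le_sum (w.map fun b => (φ b).length) L (by simp [h])

theorem isChain_flatMap {R : B → B → Prop} {e : B} {φ : A → List B}
    (hφ : ∀ b, List.IsChain R (φ b)) (hlast : ∀ b, (φ b).getLast? = some e) (hR : ∀ c, R e c)
    (w : List A) :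
    List.IsChain R (w.flatMap φ) := by
  induction w with
  | nil => exact List.isChain_nil
  | cons b w ih =>
    rw [List.flatMap_cons, List.isChain_append]
    refine ⟨hφ b, ih, fun x hx y _ => ?_⟩
    rw [hlast b, Option.mem_some_iff] at hx
    exact hx ▸ hR y

theorem getLast?_flatMap_of_forall {φ : A → List B} {e : B} (hlast : ∀ b, (φ b).getLast? = some e)
    {w : List A} (hw : w ≠ []) : (w.flatMap φ).getLast? = some e := by
  obtain ⟨v, b, rfl⟩ := (List.eq_nil_or_concat' w).resolve_left hw
  have hne : φ b ≠ [] := fun h => by simpa [h] using hlast b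
  rw [List.flatMap_append, List.flatMap_singleton, List.getLast?_append_of_ne_nil _ hne, hlast]

def PrefOf (x : ℕ → A) (w : List A) : Prop := seqTake x w.length = w

theorem prefOf_iff_getElem {x : ℕ → A} {w : List A} :
    PrefOf x w ↔ ∀ t (h : t < w.length), w[t] = x t := by
  simp [PrefOf, seqTake, List.ext_get_iff, eq_comm]

theorem PrefOf.mono {x : ℕ → A} {u w : List A} (h : PrefOf x w) (hp : u <+: w) : PrefOf x u := by
  rw [prefOf_iff_getElem] at h ⊢
  intro t ht
  rw [hp.getElem ht, h t (ht.trans_le hp.length_le)]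

theorem occursAt_iff_getElem {x : ℕ → A} {u : List A} {s : ℕ} :
    OccursAt x u s ↔ ∀ t (h : t < u.length), u[t] = x (s + t) := by
  simp [OccursAt, Fin.forall_iff, eq_comm]

theorem PrefOf.occursAt_append {x : ℕ → A} {p u : List A} (h : PrefOf x (p ++ u)) :
    OccursAt x u p.length := by
  rw [prefOf_iff_getElem] at h
  rw [occursAt_iff_getElem]
  intro t ht
  have := h (p.length + t) (by simp [ht])
  rw [List.getElem_append_right (by omega)] at this
  simpa using this

theorem OccursAt.infix {x : ℕ → A} {p v q : List A} {s : ℕ} (h : OccursAt x (p ++ v ++ q) s) :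
    OccursAt x v (s + p.length) := by
  rw [occursAt_iff_getElem] at h ⊢
  intro t ht
  have := h (p.length + t) (by simp; omega)
  rw [List.getElem_append_left (by simp; omega), List.getElem_append_right (by omega)] at this
  simpa [Nat.add_assoc] using this

theorem OccursAt.of_prefix {x : ℕ → A} {u w : List A} {s : ℕ} (h : OccursAt x w s)
    (hp : u <+: w) : OccursAt x u s := by
  obtain ⟨r, rfl⟩ := hp
  simpa using OccursAt.infix (p := []) h

theorem OccursAt.prefix_drop {x : ℕ → A} {w u : List A} {s t : ℕ} (hw : OccursAt x w s)
    (hu : OccursAt x u t) (hst : s ≤ t) (hlen : t + u.length ≤ s + w.length) :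
    u <+: w.drop (t - s) := by
  rw [occursAt_iff_getElem] at hw hu
  rw [List.prefix_iff_eq_take]
  refine List.ext_getElem (by simp; omega) fun n h₁ _ => ?_
  rw [List.getElem_take, List.getElem_drop, hw _ (by omega), hu _ h₁]
  congr 1; omega

/-! ### Images of sequences under a morphism -/

@[simp] theorem length_seqTake (z : ℕ → A) (n : ℕ) : (seqTake z n).length = n := by
  simp [seqTake]

theorem seqTake_succ (z : ℕ → A) (m : ℕ) : seqTake z (m + 1) = seqTake z m ++ [z m] := by
  simp [seqTake, List.range_succ]

theorem OccursAt.seqTake_add {z : ℕ → A} {v : List A} {m : ℕ} (hv : OccursAt z v m) :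
    seqTake z (m + v.length) = seqTake z m ++ v := by
  rw [occursAt_iff_getElem] at hv
  refine List.ext_getElem (by simp) fun t h₁ _ => ?_
  rw [length_seqTake] at h₁
  rw [List.getElem_append]
  split_ifs with ht
  · simp [seqTake]
  · simp only [length_seqTake] at ht ⊢
    rw [hv _ (by omega)]
    simp [seqTake, Nat.add_sub_cancel' (not_lt.mp ht)]

theorem occursAt_pair_s15 (z : ℕ → A) (m : ℕ) : OccursAt z [z m, z (m + 1)] m := by
  rw [occursAt_iff_getElem]
  intro t ht
  simp only [List.length_cons, List.length_nil] at ht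
  interval_cases t <;> simp

/-- The position in `φ(z)` at which the block `φ (z m)` starts. -/
def imagePos (φ : A → List B) (z : ℕ → A) (m : ℕ) : ℕ := ((seqTake z m).flatMap φ).length

section ImagePos

variable {φ : A → List B} {z : ℕ → A}

theorem imagePos_succ (m : ℕ) : imagePos φ z (m + 1) = imagePos φ z m + (φ (z m)).length := by
  simp [imagePos, seqTake_succ]

theorem imagePos_mono : Monotone (imagePos φ z) :=
  monotone_nat_of_le_succ fun m => by rw [imagePos_succ]; omega

theorem imagePos_add_le {L : ℕ} (hL : ∀ b, (φ b).length ≤ L) (m q : ℕ) :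
    imagePos φ z (m + q) ≤ imagePos φ z m + q * L := by
  induction q with
  | zero => simp
  | succ q ih =>
    rw [← Nat.add_assoc, imagePos_succ]
    have := hL (z (m + q))
    rw [Nat.succ_mul]
    omega

theorem exists_imagePos_le_lt (hpos : ∀ b, 1 ≤ (φ b).length) (t : ℕ) :
    ∃ m, imagePos φ z m ≤ t ∧ t < imagePos φ z (m + 1) := by
  induction t with
  | zero => exact ⟨0, le_rfl, by rw [imagePos_succ]; have := hpos (z 0); omega⟩
  | succ t ih =>
    obtain ⟨m, hm, htm⟩ := ih
    by_cases h : t + 1 < imagePos φ z (m + 1)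
    · exact ⟨m, by omega, h⟩
    · refine ⟨m + 1, by omega, ?_⟩
      rw [imagePos_succ (m + 1)]
      have := hpos (z (m + 1))
      omega

theorem exists_imagePos_mem_Ico {L : ℕ} (hpos : ∀ b, 1 ≤ (φ b).length)
    (hL : ∀ b, (φ b).length ≤ L) (p : ℕ) :
    ∃ m, p ≤ imagePos φ z m ∧ imagePos φ z m < p + L := by
  rcases p with _ | p
  · have := (hpos (z 0)).trans (hL (z 0))
    exact ⟨0, le_rfl, by simp [imagePos, seqTake]; omega⟩
  · obtain ⟨m, hm, hpm⟩ := exists_imagePos_le_lt (z := z) hpos p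
    refine ⟨m + 1, hpm, ?_⟩
    rw [imagePos_succ]
    have := hL (z m)
    omega

end ImagePos

def OccursInEveryWindow (x : ℕ → A) (u : List A) (M : ℕ) : Prop :=
  ∀ p, ∃ t, p ≤ t ∧ t < p + M ∧ OccursAt x u t

theorem OccursInEveryWindow.mono {x : ℕ → A} {u : List A} {M N : ℕ}
    (h : OccursInEveryWindow x u M) (hMN : M ≤ N) : OccursInEveryWindow x u N := fun p =>
  let ⟨t, hpt, htM, ht⟩ := h p
  ⟨t, hpt, by omega, ht⟩

section SeqImage

variable {φ : A → List B} {z : ℕ → A} {y : ℕ → B}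

theorem IsSeqImage.occursAt (h : IsSeqImage φ z y) {v : List A} {m : ℕ} (hv : OccursAt z v m) :
    OccursAt y (v.flatMap φ) (imagePos φ z m) := by
  have hpref : PrefOf y ((seqTake z m).flatMap φ ++ v.flatMap φ) := by
    have := h (m + v.length)
    rwa [wordMap_eq_flatMap_s15, hv.seqTake_add, List.flatMap_append] at this
  exact hpref.occursAt_append

theorem IsSeqImage.occursAt_blocks (h : IsSeqImage φ z y) (m : ℕ) :
    OccursAt y (φ (z m) ++ φ (z (m + 1))) (imagePos φ z m) := by
  simpa using h.occursAt (occursAt_pair_s15 z m)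

theorem IsSeqImage.comp {C : Type*} {ψ : B → List C} {x : ℕ → C} (h₁ : IsSeqImage ψ y x)
    (h₂ : IsSeqImage φ z y) : IsSeqImage (fun b => (φ b).flatMap ψ) z x := by
  intro n
  have h2 := h₂ n
  have h1 := h₁ ((seqTake z n).flatMap φ).length
  simp only [wordMap_eq_flatMap_s15] at h1 h2 ⊢
  rwa [h2, List.flatMap_assoc] at h1

theorem isSeqImage_singleton (z : ℕ → A) : IsSeqImage (fun b => [b]) z z := by
  intro n
  simp

theorem IsSeqImage.exists_infix_blocks (h : IsSeqImage φ z y) (hpos : ∀ b, 1 ≤ (φ b).length)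
    {u : List B} (hu : ∀ b, u.length ≤ (φ b).length) {t : ℕ} (ht : OccursAt y u t) :
    ∃ m p q, φ (z m) ++ φ (z (m + 1)) = p ++ u ++ q ∧ p.length < (φ (z m)).length := by
  obtain ⟨m, hm, htm⟩ := exists_imagePos_le_lt (z := z) hpos t
  rw [imagePos_succ] at htm
  set W := φ (z m) ++ φ (z (m + 1))
  have hW : t + u.length ≤ imagePos φ z m + W.length := by
    have := hu (z (m + 1))
    simp only [W, List.length_append]
    omega
  obtain ⟨q, hq⟩ := (h.occursAt_blocks m).prefix_drop ht hm hW
  refine ⟨m, W.take (t - imagePos φ z m), q, ?_, ?_⟩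
  · rw [List.append_assoc, hq, List.take_append_drop]
  · simp only [List.length_take, W, List.length_append]
    omega

variable {L : ℕ}

theorem IsSeqImage.occursInEveryWindow_of_infix (h : IsSeqImage φ z y)
    (hpos : ∀ b, 1 ≤ (φ b).length) (hL : ∀ b, (φ b).length ≤ L) {v : List B} (hv₀ : v ≠ [])
    (hv : ∀ b, v <:+: φ b) : OccursInEveryWindow y v (2 * L) := by
  intro p
  obtain ⟨m, hpm, hmL⟩ := exists_imagePos_mem_Ico (z := z) hpos hL p
  obtain ⟨s, r, hsr⟩ := hv (z m)
  have hblock : OccursAt y (s ++ v ++ r) (imagePos φ z m) := by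
    simpa [hsr] using h.occursAt (v := [z m]) fun _ => by simp
  have hlen := hL (z m)
  rw [← hsr, List.length_append, List.length_append] at hlen
  have := List.length_pos_of_ne_nil hv₀
  exact ⟨_, by omega, by omega, hblock.infix⟩

theorem IsSeqImage.occursInEveryWindow (h : IsSeqImage φ z y) (hpos : ∀ b, 1 ≤ (φ b).length)
    (hL : ∀ b, (φ b).length ≤ L) {G : ℕ} (hz : ∀ m, OccursInEveryWindow z [z m, z (m + 1)] G)
    {u : List B} (hu : ∀ b, u.length ≤ (φ b).length) (hocc : Occurs y u) :
    OccursInEveryWindow y u ((G + 1) * L) := by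
  intro p₀
  obtain ⟨t₀, ht₀⟩ := hocc
  obtain ⟨m₀, p, q, hpq, hpL⟩ := h.exists_infix_blocks hpos hu ht₀
  obtain ⟨m₁, hpm₁, hm₁L⟩ := exists_imagePos_mem_Ico (z := z) hpos hL p₀
  obtain ⟨m', hm₁m', hm'G, hm'⟩ := hz m₀ m₁
  have hu' : OccursAt y u (imagePos φ z m' + p.length) := by
    have := h.occursAt hm'
    rw [List.flatMap_cons, List.flatMap_singleton, hpq] at this
    exact this.infix
  refine ⟨_, (imagePos_mono hm₁m').trans' hpm₁ |>.trans (Nat.le_add_right _ _), ?_, hu'⟩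
  obtain ⟨d, rfl⟩ := Nat.exists_eq_add_of_le hm₁m'
  have hdG : (d + 1) * L ≤ G * L := Nat.mul_le_mul_right _ (by omega)
  have := hL (z m₀)
  calc imagePos φ z (m₁ + d) + p.length < imagePos φ z m₁ + d * L + L := by
        have := imagePos_add_le (z := z) hL m₁ d
        omega
    _ < p₀ + (d + 1) * L + L := by rw [Nat.succ_mul]; omega
    _ ≤ p₀ + (G + 1) * L := by rw [Nat.succ_mul G]; omega

end SeqImage

theorem not_isReturnWord_nil (x : ℕ → A) (w : List A) : ¬ IsReturnWord x [] w := by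
  rintro ⟨-, -, hcount⟩
  have : {i : ℕ | ([] : List A) <+: (w ++ []).drop i} = Set.univ :=
    Set.eq_univ_of_forall fun _ => List.nil_prefix
  rw [OccCountEq, this, Set.infinite_univ.ncard] at hcount
  omega

/-- A return word to `u` ends where the next occurrence of `u` starts. -/
theorem IsReturnWord.length_le {x : ℕ → A} {u w : List A} {M : ℕ} (hw : IsReturnWord x u w)
    (hu : OccursInEveryWindow x u M) : w.length ≤ M := by
  obtain ⟨⟨t, hwu⟩, hpref, hcount⟩ := hw
  obtain ⟨i₁, i₂, -, hi⟩ := Set.ncard_eq_two.mp hcount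
  have hmem : ∀ j, u <+: (w ++ u).drop j ↔ j = i₁ ∨ j = i₂ := fun j => by
    simpa using congrArg (j ∈ ·) hi
  have h0 := (hmem 0).mp (by simpa using hpref)
  have hw' := (hmem w.length).mp (by simp)
  obtain ⟨s, hts, hsM, hs⟩ := hu (t + 1)
  by_contra! hlt
  have hj := (hmem (s - t)).mp <| hwu.prefix_drop hs (by omega) (by simp; omega)
  omega

theorem linearlyRecurrentWith_of_occursInEveryWindow {x : ℕ → A} {K : ℕ}
    (h : ∀ u, u ≠ [] → Occurs x u → OccursInEveryWindow x u (K * u.length)) :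
    LinearlyRecurrentWith x K := by
  refine ⟨fun u hu => ?_, fun u w hw => ?_⟩
  · rcases eq_or_ne u [] with rfl | hne
    · exact ⟨1, fun p => ⟨p, le_rfl, by omega, fun k => k.elim0⟩⟩
    · exact ⟨_, h u hne hu⟩
  · have hne : u ≠ [] := by rintro rfl; exact not_isReturnWord_nil x w hw
    have ⟨⟨t, hwu⟩, hpref, _⟩ := hw
    exact hw.length_le (h u hne ⟨t, hwu.of_prefix hpref⟩)

/-! ### The tower of an S-adic sequence -/

theorem seqTake_prefix (x : ℕ → A) {m n : ℕ} (h : m ≤ n) : seqTake x m <+: seqTake x n := by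
  rw [List.prefix_iff_eq_take]
  simp [seqTake, ← List.map_take, h]

theorem PrefOf.rel_of_isChain {R : A → A → Prop} {x : ℕ → A} {w : List A} (hw : PrefOf x w)
    (hc : List.IsChain R w) {m : ℕ} (hm : m + 1 < w.length) : R (x m) (x (m + 1)) := by
  rw [prefOf_iff_getElem] at hw
  rw [← hw m (by omega), ← hw (m + 1) hm]
  exact List.isChain_iff_getElem.mp hc m hm

theorem chain_succ_left (σ : ℕ → A → List A) (r n : ℕ) (b : A) :
    chain σ r (n + 1) b = (chain σ (r + 1) n b).flatMap (σ r) := by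
  induction n generalizing b with
  | zero => simp [chain]
  | succ n ih =>
    simp only [chain, wordMap_eq_flatMap_s15] at ih ⊢
    rw [List.flatMap_assoc, Nat.add_right_comm, ← Nat.add_assoc]
    exact congrArg (List.flatMap · _) (funext ih)

/-- The `k`-th level `y_k = lim_n σ_k ⋯ σ_{k+n-1}(a)` of the tower; its letter at position `m`
is read off the approximation with `m` morphisms, which is already longer than `m`. -/
def towerSeq (σ : ℕ → A → List A) (a : A) (k m : ℕ) : A := (chain σ k m a).getD m a

section Tower

variable {σ : ℕ → A → List A} {a : A}

theorem chain_prefix_chain_succ (hstart : ∀ n, [a] <+: σ n a) (k m : ℕ) :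
    chain σ k m a <+: chain σ k (m + 1) a := by
  simpa [chain] using (hstart (k + m)).flatMap (chain σ k m)

theorem chain_prefix_chain (hstart : ∀ n, [a] <+: σ n a) (k : ℕ) {m M : ℕ} (h : m ≤ M) :
    chain σ k m a <+: chain σ k M a := by
  induction M, h using Nat.le_induction with
  | base => exact List.prefix_rfl
  | succ M _ ih => exact ih.trans (chain_prefix_chain_succ hstart k M)

theorem two_pow_le_length_chain (hlong : ∀ n b, 2 ≤ (σ n b).length) (r n : ℕ) (b : A) :
    2 ^ n ≤ (chain σ r n b).length := by
  induction n generalizing r b with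
  | zero => simp [chain]
  | succ n ih =>
    rw [chain_succ_left, pow_succ]
    exact (Nat.mul_le_mul_right 2 (ih _ _)).trans (le_length_flatMap (hlong r) _)

theorem lt_length_chain (hlong : ∀ n b, 2 ≤ (σ n b).length) {m n : ℕ} (h : m ≤ n) (r : ℕ)
    (b : A) : m < (chain σ r n b).length :=
  calc m < 2 ^ m := Nat.lt_two_pow_self
    _ ≤ 2 ^ n := Nat.pow_le_pow_right two_pos h
    _ ≤ _ := two_pow_le_length_chain hlong r n b

theorem towerSeq_eq_getElem (hstart : ∀ n, [a] <+: σ n a) (hlong : ∀ n b, 2 ≤ (σ n b).length)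
    {k M m : ℕ} (h : m < (chain σ k M a).length) : towerSeq σ a k m = (chain σ k M a)[m] := by
  have hm := lt_length_chain hlong le_rfl k a (m := m)
  rw [towerSeq, List.getD_eq_getElem _ _ hm]
  rcases le_total m M with hM | hM
  · exact (chain_prefix_chain hstart k hM).getElem hm
  · exact ((chain_prefix_chain hstart k hM).getElem h).symm

theorem prefOf_chain (hstart : ∀ n, [a] <+: σ n a) (hlong : ∀ n b, 2 ≤ (σ n b).length)
    (k M : ℕ) : PrefOf (towerSeq σ a k) (chain σ k M a) :=
  prefOf_iff_getElem.mpr fun _ h => (towerSeq_eq_getElem hstart hlong h).symm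

theorem isSeqImage_towerSeq (hstart : ∀ n, [a] <+: σ n a) (hlong : ∀ n b, 2 ≤ (σ n b).length)
    (k : ℕ) : IsSeqImage (σ k) (towerSeq σ a (k + 1)) (towerSeq σ a k) := by
  intro n
  have hpref : seqTake (towerSeq σ a (k + 1)) n <+: chain σ (k + 1) n a := by
    rw [← prefOf_chain hstart hlong (k + 1) n]
    exact seqTake_prefix _ (lt_length_chain hlong le_rfl _ a).le
  refine (prefOf_chain hstart hlong k (n + 1)).mono ?_
  rw [wordMap_eq_flatMap_s15, chain_succ_left]
  exact hpref.flatMap _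

theorem isSeqImage_chain (hstart : ∀ n, [a] <+: σ n a) (hlong : ∀ n b, 2 ≤ (σ n b).length)
    (k n : ℕ) : IsSeqImage (chain σ k n) (towerSeq σ a (k + n)) (towerSeq σ a k) := by
  induction n with
  | zero => exact isSeqImage_singleton _
  | succ n ih =>
    have h := ih.comp (isSeqImage_towerSeq hstart hlong (k + n))
    simpa [chain, ← Nat.add_assoc] using h

theorem towerSeq_rel (hstart : ∀ n, [a] <+: σ n a) (hlong : ∀ n b, 2 ≤ (σ n b).length)
    {R : A → A → Prop} {k : ℕ} (hR : ∀ w : List A, List.IsChain R (w.flatMap (σ k))) (m : ℕ) :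
    R (towerSeq σ a k m) (towerSeq σ a k (m + 1)) := by
  refine (prefOf_chain hstart hlong k (m + 2)).rel_of_isChain ?_
    (lt_length_chain hlong (m + 1).le_succ k a)
  rw [chain_succ_left]
  exact hR _

theorem eq_towerSeq_of_convergesTo (hstart : ∀ n, [a] <+: σ n a)
    (hlong : ∀ n b, 2 ≤ (σ n b).length) {x : ℕ → A}
    (hx : ConvergesTo (fun n => chain σ 0 n a) a x) : x = towerSeq σ a 0 := by
  funext m
  obtain ⟨N, hN⟩ := hx m
  have hm := lt_length_chain hlong (le_max_right N m) 0 a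
  rw [← hN _ (le_max_left N m), repSeq, Nat.mod_eq_of_lt hm, List.getD_eq_getElem _ _ hm,
    towerSeq_eq_getElem hstart hlong hm]

end Tower

/-! ### The Sturmian directive sequence -/

@[simp] theorem tau2_zero : tau2 0 = [0] := rfl
@[simp] theorem tau2_one : tau2 1 = [1, 0] := rfl
@[simp] theorem sigma2_zero : sigma2 0 = [0, 1] := rfl
@[simp] theorem sigma2_one : sigma2 1 = [1] := rfl

theorem powM_tau2_zero (n : ℕ) : powM tau2 n 0 = [0] := by
  induction n with
  | zero => rfl
  | succ n ih => simp [powM, compM, ih]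

theorem powM_tau2_one (n : ℕ) : powM tau2 n 1 = 1 :: List.replicate n 0 := by
  induction n with
  | zero => rfl
  | succ n ih => simp [powM, compM, ih, List.flatMap_replicate, List.replicate_succ]

theorem powM_sigma2_zero (n : ℕ) : powM sigma2 n 0 = 0 :: List.replicate n 1 := by
  induction n with
  | zero => rfl
  | succ n ih => simp [powM, compM, ih, List.flatMap_replicate, List.replicate_succ]

theorem powM_sigma2_one (n : ℕ) : powM sigma2 n 1 = [1] := by
  induction n with
  | zero => rfl
  | succ n ih => simp [powM, compM, ih]

/-- `ζ_k` of the paper, so that `ξ_{k+1} = ξ_k ∘ ζ_k`. -/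
def xiStep (i : ℕ → ℕ) (k : ℕ) : Fin 2 → List (Fin 2) :=
  compM (powM tau2 (i (2 * k + 1))) (powM sigma2 (i (2 * k + 2)))

theorem xi_succ_apply (i : ℕ → ℕ) (k : ℕ) (b : Fin 2) :
    xi i (k + 1) b = (xiStep i k b).flatMap (xi i k) :=
  wordMap_eq_flatMap_s15 _ _

theorem xi_eq_chain (i : ℕ → ℕ) (k : ℕ) : xi i k = chain (xiStep i) 0 k := by
  induction k with
  | zero => rfl
  | succ k ih =>
    funext b
    simp only [xi_succ_apply, chain, wordMap_eq_flatMap_s15, Nat.zero_add, ih]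

theorem xiStep_one (i : ℕ → ℕ) (k : ℕ) :
    xiStep i k 1 = 1 :: List.replicate (i (2 * k + 1)) 0 := by
  simp [xiStep, compM, powM_sigma2_one, powM_tau2_one]

theorem xiStep_zero (i : ℕ → ℕ) (k : ℕ) :
    xiStep i k 0 = 0 :: (List.replicate (i (2 * k + 2)) (xiStep i k 1)).flatten := by
  simp [xiStep, compM, powM_sigma2_zero, powM_sigma2_one, powM_tau2_zero, powM_tau2_one,
    List.flatMap_replicate]

theorem prefix_xiStep_zero (i : ℕ → ℕ) (k : ℕ) : [0] <+: xiStep i k 0 := by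
  rw [xiStep_zero]
  exact ⟨_, rfl⟩

section XiStep

variable {i : ℕ → ℕ}

theorem exists_xiStep_zero_eq (hp : ∀ n, 0 < i (n + 1)) (k : ℕ) :
    ∃ r, xiStep i k 0 = 0 :: (xiStep i k 1 ++ r) := by
  obtain ⟨l, hl⟩ := Nat.exists_eq_add_of_lt (hp (2 * k + 1))
  exact ⟨_, by rw [xiStep_zero, hl, List.replicate_succ, List.flatten_cons]⟩

theorem exists_xiStep_one_eq (hp : ∀ n, 0 < i (n + 1)) (k : ℕ) :
    ∃ r, xiStep i k 1 = [1, 0] ++ r ∧ ∃ q, xiStep i k 1 = q ++ [0] := by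
  obtain ⟨j, hj⟩ := Nat.exists_eq_add_of_lt (hp (2 * k))
  rw [xiStep_one, hj, zero_add]
  exact ⟨_, by rw [List.replicate_succ]; rfl, 1 :: List.replicate j 0,
    by rw [List.replicate_succ']; rfl⟩

theorem ten_infix_xiStep (hp : ∀ n, 0 < i (n + 1)) (k : ℕ) (b : Fin 2) :
    [1, 0] <:+: xiStep i k b := by
  obtain ⟨r, hr, -⟩ := exists_xiStep_one_eq hp k
  have h1 : [1, 0] <:+: xiStep i k 1 := (hr ▸ List.prefix_append _ _).isInfix
  fin_cases b
  · obtain ⟨r', hr'⟩ := exists_xiStep_zero_eq hp k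
    exact h1.trans (hr' ▸ List.infix_cons (List.prefix_append _ _).isInfix)
  · exact h1

theorem infix_xiStep_one_append_zero (hp : ∀ n, 0 < i (n + 1)) (k : ℕ) {b c : Fin 2}
    (hbc : b = 0 ∨ c = 0) : [b, c] <:+: xiStep i k 1 ++ xiStep i k 0 := by
  obtain ⟨r, hr, q, hq⟩ := exists_xiStep_one_eq hp k
  obtain ⟨r', hr'⟩ := exists_xiStep_zero_eq hp k
  have h001 : [0, 0, 1] <:+: xiStep i k 1 ++ xiStep i k 0 :=
    ⟨q, [0] ++ r ++ r', by rw [hr']; nth_rw 1 [hq]; rw [hr]; simp⟩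
  fin_cases b <;> fin_cases c
  · exact (List.prefix_append [0, 0] [1]).isInfix.trans h001
  · exact (List.suffix_append [0] [0, 1]).isInfix.trans h001
  · exact (hr ▸ List.prefix_append _ _ |>.trans (List.prefix_append _ _)).isInfix
  · exact absurd hbc (by decide)

theorem two_le_length_xiStep (hp : ∀ n, 0 < i (n + 1)) (k : ℕ) (b : Fin 2) :
    2 ≤ (xiStep i k b).length :=
  (ten_infix_xiStep hp k b).length_le

theorem isChain_xiStep (hp : ∀ n, 0 < i (n + 1)) (k : ℕ) (b : Fin 2) :
    List.IsChain (fun c d : Fin 2 => c = 0 ∨ d = 0) (xiStep i k b) ∧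
      (xiStep i k b).getLast? = some 0 := by
  obtain ⟨j, hj⟩ := Nat.exists_eq_add_of_lt (hp (2 * k))
  have hτ : ∀ c, List.IsChain (fun c d : Fin 2 => c = 0 ∨ d = 0) (powM tau2 (i (2 * k + 1)) c) ∧
      (powM tau2 (i (2 * k + 1)) c).getLast? = some 0 := by
    rw [Fin.forall_fin_two, hj]
    refine ⟨by simp [powM_tau2_zero], ?_⟩
    rw [powM_tau2_one]
    exact ⟨List.isChain_iff_getElem.mpr fun _ _ => Or.inr (by simp),
      by rw [List.replicate_succ', ← List.cons_append, List.getLast?_concat]⟩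
  have hne : powM sigma2 (i (2 * k + 2)) b ≠ [] := by
    fin_cases b <;> simp [powM_sigma2_zero, powM_sigma2_one]
  simp only [xiStep, compM, wordMap_eq_flatMap_s15]
  exact ⟨isChain_flatMap (fun c => (hτ c).1) (fun c => (hτ c).2) (fun _ => Or.inl rfl) _,
    getLast?_flatMap_of_forall (fun c => (hτ c).2) hne⟩

theorem isChain_flatMap_xiStep (hp : ∀ n, 0 < i (n + 1)) (k : ℕ) (w : List (Fin 2)) :
    List.IsChain (fun c d : Fin 2 => c = 0 ∨ d = 0) (w.flatMap (xiStep i k)) :=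
  isChain_flatMap (fun b => (isChain_xiStep hp k b).1) (fun b => (isChain_xiStep hp k b).2)
    (fun _ => Or.inl rfl) w

end XiStep

/-- The bound on `|ζ_k(0)| = 1 + i_{2k+2} (1 + i_{2k+1})`, the longer of the two blocks. -/
def stepBound (B : ℕ) : ℕ := 1 + B * (1 + B)

theorem length_xiStep_le {i : ℕ → ℕ} {B : ℕ} (hB : ∀ n, i (n + 1) ≤ B) (k : ℕ) (b : Fin 2) :
    (xiStep i k b).length ≤ stepBound B := by
  have hj := hB (2 * k)
  have hl := hB (2 * k + 1)
  have h₁ : (xiStep i k 1).length = i (2 * k + 1) + 1 := by simp [xiStep_one]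
  have h₀ : (xiStep i k 0).length = i (2 * k + 2) * (i (2 * k + 1) + 1) + 1 := by
    simp [xiStep_zero, h₁]
  revert b
  rw [Fin.forall_fin_two, h₀, h₁, stepBound]
  constructor <;> nlinarith

theorem exists_le_apply_and_apply_le_mul {f g : ℕ → ℕ} {D n : ℕ} (hf : ∃ k, n ≤ f k)
    (h₀ : g 0 ≤ D * n) (hg : ∀ k, g (k + 1) ≤ D * f k) : ∃ k, n ≤ f k ∧ g k ≤ D * n := by
  classical
  refine ⟨Nat.find hf, Nat.find_spec hf, ?_⟩
  rcases h : Nat.find hf with _ | k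
  · exact h₀
  · have hk : f k < n := not_le.mp (Nat.find_min hf (by omega))
    exact (hg k).trans (Nat.mul_le_mul_left _ hk.le)

section Lengths

variable {i : ℕ → ℕ}

theorem length_xi_le_zero (hp : ∀ n, 0 < i (n + 1)) (k : ℕ) (b : Fin 2) :
    (xi i k b).length ≤ (xi i k 0).length := by
  rcases k with _ | k
  · fin_cases b <;> rfl
  · fin_cases b
    · rfl
    · obtain ⟨r, hr⟩ := exists_xiStep_zero_eq hp k
      have : xiStep i k 1 <:+: xiStep i k 0 :=
        hr ▸ List.infix_cons (List.prefix_append _ _).isInfix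
      simpa [xi_succ_apply] using (this.flatMap (xi i k)).length_le

theorem length_xi_zero_le_succ_one (hp : ∀ n, 0 < i (n + 1)) (k : ℕ) :
    (xi i k 0).length ≤ (xi i (k + 1) 1).length := by
  have : [0] <:+: xiStep i k 1 :=
    (List.suffix_append [1] [0]).isInfix.trans (ten_infix_xiStep hp k 1)
  simpa [xi_succ_apply] using (this.flatMap (xi i k)).length_le

theorem length_xi_succ_le {B : ℕ} (hp : ∀ n, 0 < i (n + 1)) (hB : ∀ n, i (n + 1) ≤ B) (k : ℕ)
    (b : Fin 2) : (xi i (k + 1) b).length ≤ stepBound B * (xi i k 0).length := by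
  rw [xi_succ_apply]
  exact (length_flatMap_le_s15 (length_xi_le_zero hp k) _).trans
    (Nat.mul_le_mul_right _ (length_xiStep_le hB k b))

theorem length_xi_zero_le {B : ℕ} (hp : ∀ n, 0 < i (n + 1)) (hB : ∀ n, i (n + 1) ≤ B) (k : ℕ) :
    (xi i k 0).length ≤ stepBound B * (xi i k 1).length := by
  rcases k with _ | k
  · simp [xi, stepBound]
  · exact (length_xi_succ_le hp hB k 0).trans
      (Nat.mul_le_mul_left _ (length_xi_zero_le_succ_one hp k))

theorem exists_xi_level {B : ℕ} (hp : ∀ n, 0 < i (n + 1)) (hB : ∀ n, i (n + 1) ≤ B) {n : ℕ}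
    (hn : 0 < n) : ∃ k, n ≤ (xi i k 1).length ∧ (xi i k 0).length ≤ stepBound B ^ 2 * n := by
  refine exists_le_apply_and_apply_le_mul ⟨n, ?_⟩ ?_ fun k => ?_
  · rw [xi_eq_chain]
    exact (lt_length_chain (two_le_length_xiStep hp) le_rfl 0 1).le
  · simpa [xi, stepBound] using Nat.one_le_iff_ne_zero.mpr (by positivity)
  · calc (xi i (k + 1) 0).length ≤ stepBound B * (xi i k 0).length :=
          length_xi_succ_le hp hB k 0
      _ ≤ stepBound B * (stepBound B * (xi i k 1).length) :=
        Nat.mul_le_mul_left _ (length_xi_zero_le hp hB k)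
      _ = stepBound B ^ 2 * (xi i k 1).length := by ring

end Lengths

section SturmTower

variable {i : ℕ → ℕ} {B : ℕ}

/-- The two-letter factors `00`, `01`, `10` of `y_k` all lie in `ζ_k(10)`, which lies in
`ζ_k ζ_{k+1}(e)` for every letter `e`. -/
theorem occursInEveryWindow_pair (hp : ∀ n, 0 < i (n + 1)) (hB : ∀ n, i (n + 1) ≤ B) (k m : ℕ) :
    OccursInEveryWindow (towerSeq (xiStep i) 0 k)
      [towerSeq (xiStep i) 0 k m, towerSeq (xiStep i) 0 k (m + 1)] (2 * stepBound B ^ 2) := by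
  have hstart := prefix_xiStep_zero i
  have hlong := two_le_length_xiStep hp
  have himg := (isSeqImage_towerSeq hstart hlong k).comp (isSeqImage_towerSeq hstart hlong (k + 1))
  refine himg.occursInEveryWindow_of_infix (fun e => ?_) (fun e => ?_) (List.cons_ne_nil _ _)
    fun e => ?_
  · have := (Nat.mul_le_mul_right 2 (hlong (k + 1) e)).trans (le_length_flatMap (hlong k) _)
    omega
  · exact (length_flatMap_le_s15 (length_xiStep_le hB k) _).trans
      (by rw [sq]; exact Nat.mul_le_mul_right _ (length_xiStep_le hB (k + 1) e))
  · have hpair := towerSeq_rel hstart hlong (isChain_flatMap_xiStep hp k) m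
    refine (infix_xiStep_one_append_zero hp k hpair).trans ?_
    simpa using (ten_infix_xiStep hp (k + 1) e).flatMap (xiStep i k)

theorem occursInEveryWindow_sturm (hp : ∀ n, 0 < i (n + 1)) (hB : ∀ n, i (n + 1) ≤ B)
    {u : List (Fin 2)} (hu : u ≠ []) (hocc : Occurs (towerSeq (xiStep i) 0 0) u) :
    OccursInEveryWindow (towerSeq (xiStep i) 0 0) u
      ((2 * stepBound B ^ 2 + 1) * stepBound B ^ 2 * u.length) := by
  obtain ⟨k, hku, hk⟩ := exists_xi_level hp hB (List.length_pos_of_ne_nil hu)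
  have himg : IsSeqImage (xi i k) (towerSeq (xiStep i) 0 k) (towerSeq (xiStep i) 0 0) := by
    simpa [xi_eq_chain] using isSeqImage_chain (prefix_xiStep_zero i) (two_le_length_xiStep hp) 0 k
  have hpos : ∀ b, 1 ≤ (xi i k b).length := fun b => by
    rw [xi_eq_chain]
    exact lt_length_chain (two_le_length_xiStep hp) (Nat.zero_le k) 0 b
  have hu' : ∀ b, u.length ≤ (xi i k b).length :=
    Fin.forall_fin_two.mpr ⟨hku.trans (length_xi_le_zero hp k 1), hku⟩
  refine (himg.occursInEveryWindow hpos (length_xi_le_zero hp k) (occursInEveryWindow_pair hp hB k)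
    hu' hocc).mono ?_
  rw [mul_assoc]
  exact Nat.mul_le_mul_left _ hk

end SturmTower

/-- If `(i_n)_{n ≥ 1}` is a bounded sequence of positive integers, then
`x = lim_k τ^{i₁}σ^{i₂}τ^{i₃}⋯τ^{i_{2k-1}}σ^{i_{2k}}(000⋯)` is linearly recurrent. -/
theorem sturmian_bounded_cf_lr (i : ℕ → ℕ) (hpos : ∀ n ≥ 1, 0 < i n)
    (hbd : ∃ B : ℕ, ∀ n ≥ 1, i n ≤ B)
    (x : ℕ → Fin 2) (hx : ConvergesTo (fun k => xi i k 0) 0 x) :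
    LinearlyRecurrent x := by
  obtain ⟨B, hB⟩ := hbd
  have hp : ∀ n, 0 < i (n + 1) := fun n => hpos _ n.succ_pos
  have hB' : ∀ n, i (n + 1) ≤ B := fun n => hB _ n.succ_pos
  obtain rfl : x = towerSeq (xiStep i) 0 0 :=
    eq_towerSeq_of_convergesTo (prefix_xiStep_zero i) (two_le_length_xiStep hp)
      (by simpa only [xi_eq_chain] using hx)
  exact ⟨_, linearlyRecurrentWith_of_occursInEveryWindow fun _ hu hocc =>
    occursInEveryWindow_sturm hp hB' hu hocc⟩

end DurandLR
end
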